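/- Let D{m;S} = {(d_1,...,d_m) ∈ R^m : d_i^2 = 0 for all i, and d_{i_1}···d_{i_k} = 0 for every (i_1,...,i_k) ∈ S} be a simplicial infinitesimal object in a commutative ring R, and let n be its dimension, i.e., the maximal length of an increasing sequence 1 ≤ i_1 < ... < i_n ≤ m containing no subsequence belonging to S. Then for every (d_1,...,d_m) ∈ D{m;S} one has (d_1 + ... + d_m)^{n+1} = 0. -/
import Mathlib


open Finset

/-- Let `D{m;S}` be a simplicial infinitesimal object: tuples `(d₁,...,dₘ)` with
`dᵢ² = 0` and `∏_{i ∈ s} dᵢ = 0` for every `s ∈ S` (strictly increasing index sequences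
are identified with finite subsets of `Fin m`).  If `n` is its dimension — i.e. there is
a subset of cardinality `n` containing no member of `S`, while every subset of
cardinality `n+1` contains a member of `S` — then `(d₁ + ... + dₘ)^{n+1} = 0`. -/
theorem sum_mem_Dn_of_simplicial {R : Type*} [CommRing R] (m n : ℕ)
    (S : Finset (Finset (Fin m))) (d : Fin m → R)
    (hsq : ∀ i : Fin m, d i ^ 2 = 0)
    (hS : ∀ s ∈ S, ∏ i ∈ s, d i = 0)
    (hdim_le : ∀ T : Finset (Fin m), T.card = n + 1 → ∃ s ∈ S, s ⊆ T)
    (hdim_ge : ∃ T : Finset (Fin m), T.card = n ∧ ∀ s ∈ S, ¬ s ⊆ T) :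
    (∑ i, d i) ^ (n + 1) = 0 := by
  classical
  rw [Finset.sum_pow_eq_sum_piAntidiag]
  apply Finset.sum_eq_zero
  intro k hk
  rw [Finset.mem_piAntidiag] at hk
  obtain ⟨hsum, -⟩ := hk
  by_cases h2 : ∃ i, 2 ≤ k i
  · obtain ⟨i, hi⟩ := h2
    have : d i ^ k i = 0 := by
      obtain ⟨c, hc⟩ := Nat.exists_eq_add_of_le hi
      rw [hc, pow_add, hsq i, zero_mul]
    rw [Finset.prod_eq_zero (Finset.mem_univ i) this, mul_zero]
  · push_neg at h2
    set T : Finset (Fin m) := Finset.univ.filter (fun i => k i = 1) with hT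
    have hprod : ∏ i, d i ^ k i = ∏ i ∈ T, d i := by
      rw [← Finset.prod_subset T.subset_univ (fun x _ hx => by
        have : k x = 0 := by
          have := Nat.lt_of_lt_of_le (h2 x) (le_refl 2)
          simp only [hT, Finset.mem_filter, Finset.mem_univ, true_and] at hx
          omega
        rw [this, pow_zero])]
      apply Finset.prod_congr rfl
      intro x hx
      simp only [hT, Finset.mem_filter] at hx
      rw [hx.2, pow_one]
    have hcard : T.card = n + 1 := by
      have : ∑ i ∈ T, k i = ∑ i, k i := by
        apply Finset.sum_subset T.subset_univ
        intro x _ hx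
        simp only [hT, Finset.mem_filter, Finset.mem_univ, true_and] at hx
        have := h2 x; omega
      have h1 : ∑ i ∈ T, k i = T.card := by
        rw [Finset.card_eq_sum_ones]
        apply Finset.sum_congr rfl
        intro x hx
        simp only [hT, Finset.mem_filter] at hx
        exact hx.2
      rw [← h1, this]; exact hsum
    obtain ⟨s, hsS, hsub⟩ := hdim_le T hcard
    rw [hprod, ← Finset.prod_sdiff hsub, hS s hsS, mul_zero, mul_zero]
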